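/- arXiv:2604.04272 — 4 statements merged into one kernel-verified Lean document; each statement's English description precedes it below -/
import Mathlib

section
/- Let M be a nonempty compact metric space and f : M → ℝ^D a continuous map. For every open set U ⊆ M, the hit set H_U := { x ∈ ℝ^D : there exists m ∈ U with ‖x − f(m)‖ = min_{m' ∈ M} ‖x − f(m')‖ } is a countable union of closed subsets of ℝ^D; in particular, H_U is a Borel-measurable subset of ℝ^D. -/
/-!
The infimum `⨅ m, ‖x - f m‖` is the distance from `x` to the range of `f`. For a compact `K`,
`x` is hit by `K` exactly when `infDist x (f '' K) ≤ infDist x (range f)`, because the distance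
to the compact set `f '' K` is attained; as an inequality between continuous functions this is a
closed condition. An open subset of a metric space is a countable union of closed sets, which
are compact when `M` is, and the hit set of a union is the union of the hit sets.
-/

open Metric Set

section HitSet

variable {E M : Type*} [SeminormedAddCommGroup E]

def hitSet (f : M → E) (K : Set M) : Set E :=
  {x | ∃ m ∈ K, ‖x - f m‖ = ⨅ m' : M, ‖x - f m'‖}

theorem iInf_norm_sub_eq_infDist_range (f : M → E) (x : E) :
    ⨅ m : M, ‖x - f m‖ = infDist x (range f) := by
  rw [infDist_eq_iInf, iInf_range' (dist x) f]
  simp only [dist_eq_norm]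

theorem hitSet_iUnion {ι : Type*} (f : M → E) (K : ι → Set M) :
    hitSet f (⋃ i, K i) = ⋃ i, hitSet f (K i) := by
  ext x
  simp only [hitSet, mem_iUnion, mem_ofPred_eq]
  constructor
  · rintro ⟨m, ⟨i, hm⟩, hmin⟩
    exact ⟨i, m, hm, hmin⟩
  · rintro ⟨i, m, hm, hmin⟩
    exact ⟨m, ⟨i, hm⟩, hmin⟩

theorem hitSet_eq_infDist_image_le [TopologicalSpace M] {f : M → E} (hf : Continuous f)
    {K : Set M} (hK : IsCompact K) (hKne : K.Nonempty) :
    hitSet f K = {x | infDist x (f '' K) ≤ infDist x (range f)} := by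
  ext x
  simp only [hitSet, mem_ofPred_eq, iInf_norm_sub_eq_infDist_range]
  simp only [← dist_eq_norm]
  constructor
  · rintro ⟨m, hm, hmin⟩
    exact hmin ▸ infDist_le_dist_of_mem (mem_image_of_mem f hm)
  · intro hle
    obtain ⟨_, ⟨m, hm, rfl⟩, hdist⟩ :=
      (hK.image hf).exists_infDist_eq_dist (hKne.image f) x
    exact ⟨m, hm, le_antisymm (hdist ▸ hle) (infDist_le_dist_of_mem (mem_range_self m))⟩

theorem IsCompact.isClosed_hitSet [TopologicalSpace M] {f : M → E} (hf : Continuous f)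
    {K : Set M} (hK : IsCompact K) : IsClosed (hitSet f K) := by
  rcases K.eq_empty_or_nonempty with rfl | hKne
  · simp [hitSet]
  rw [hitSet_eq_infDist_image_le hf hK hKne]
  exact isClosed_le (continuous_infDist_pt _) (continuous_infDist_pt _)

theorem IsOpen.exists_hitSet_eq_iUnion_isClosed [PseudoEMetricSpace M] [CompactSpace M] {f : M → E}
    (hf : Continuous f) {U : Set M} (hU : IsOpen U) :
    ∃ F : ℕ → Set E, (∀ n, IsClosed (F n)) ∧ hitSet f U = ⋃ n, F n := by
  obtain ⟨K, hK, -, hKU, -⟩ := hU.exists_iUnion_isClosed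
  exact ⟨fun n => hitSet f (K n), fun n => (hK n).isCompact.isClosed_hitSet hf,
    hKU ▸ hitSet_iUnion f K⟩

end HitSet

theorem stmt_1_general {D : ℕ} {M : Type*} [MetricSpace M] [CompactSpace M]
    (f : M → EuclideanSpace ℝ (Fin D)) (hf : Continuous f)
    (U : Set M) (hU : IsOpen U) :
    (∃ E : ℕ → Set (EuclideanSpace ℝ (Fin D)),
        (∀ n, IsClosed (E n)) ∧
        {x : EuclideanSpace ℝ (Fin D) | ∃ m ∈ U, ‖x - f m‖ = ⨅ m' : M, ‖x - f m'‖}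
          = ⋃ n, E n) ∧
      MeasurableSet
        {x : EuclideanSpace ℝ (Fin D) | ∃ m ∈ U, ‖x - f m‖ = ⨅ m' : M, ‖x - f m'‖} := by
  obtain ⟨F, hF, hUF⟩ := hU.exists_hitSet_eq_iUnion_isClosed hf
  refine ⟨⟨F, hF, hUF⟩, ?_⟩
  change MeasurableSet (hitSet f U)
  rw [hUF]
  exact MeasurableSet.iUnion fun n => (hF n).measurableSet

/-- **The hit set of an open set is an Fσ set (hence Borel).**
Let `M` be a nonempty compact metric space and `f : M → ℝ^D` continuous. For every open
`U ⊆ M`, the hit set `H_U = {x | ∃ m ∈ U, ‖x - f m‖ = min_{m'∈M} ‖x - f m'‖}` is a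
countable union of closed subsets of `ℝ^D`; in particular it is Borel measurable. -/
theorem stmt_1 {D : ℕ} {M : Type*} [MetricSpace M] [CompactSpace M] [Nonempty M]
    (f : M → EuclideanSpace ℝ (Fin D)) (hf : Continuous f)
    (U : Set M) (hU : IsOpen U) :
    (∃ E : ℕ → Set (EuclideanSpace ℝ (Fin D)),
        (∀ n, IsClosed (E n)) ∧
        {x : EuclideanSpace ℝ (Fin D) | ∃ m ∈ U, ‖x - f m‖ = ⨅ m' : M, ‖x - f m'‖}
          = ⋃ n, E n) ∧
      MeasurableSet
        {x : EuclideanSpace ℝ (Fin D) | ∃ m ∈ U, ‖x - f m‖ = ⨅ m' : M, ‖x - f m'‖} :=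
  stmt_1_general f hf U hU
end

section
/- Let M be a nonempty compact metric space, let ℙ be a Borel probability measure on ℝ^D with compact support, and set C := sup_{x ∈ supp(ℙ)} ‖x‖. Let h_k : M → ℝ^D (k ∈ ℕ) and h_∞ : M → ℝ^D be continuous maps with max_{m∈M} ‖h_k(m) − h_∞(m)‖ → 0 as k → ∞, and suppose that for every x ∈ supp(ℙ) the set argmin_{m∈M} ‖x − h_∞(m)‖ is a singleton {m_∞(x)}, with x ↦ m_∞(x) Borel measurable on supp(ℙ). Let m_k : ℝ^D → M be Borel measurable with m_k(x) ∈ argmin_{m∈M} ‖x − h_k(m)‖ for every x ∈ ℝ^D. Then for every continuous g : M → ℝ^D with max_{m∈M} ‖g(m)‖ ≤ 2C, the integrals converge: ∫ ‖x − g(m_k(x))‖² dℙ(x) → ∫ ‖x − g(m_∞(x))‖² dℙ(x) as k → ∞. -/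
open MeasureTheory Filter Topology

/-!
For each `x` in the support, the objectives `m ↦ ‖x - h_k m‖` converge uniformly to
`m ↦ ‖x - h_∞ m‖`, so on the compact `M` every cluster point of the minimizers `m_k x` minimizes
the limit objective and hence equals `m_∞ x`. The integrands therefore converge almost
everywhere (the support is conull), and on the support they are bounded by `(3C)²`, so dominated
convergence applies.
-/

/-- The (topological) support of a Borel measure: the set of points all of whose
neighborhoods have positive measure. -/
def measureSupport {E : Type*} [TopologicalSpace E] [MeasurableSpace E]
    (μ : Measure E) : Set E :=
  {x | ∀ U ∈ nhds x, 0 < μ U}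

theorem measureSupport_eq_support {E : Type*} [TopologicalSpace E] [MeasurableSpace E]
    (μ : Measure E) : measureSupport μ = μ.support :=
  Set.ext fun x => (μ.mem_support_iff_forall x).symm

theorem ae_mem_measureSupport {E : Type*} [TopologicalSpace E] [HereditarilyLindelofSpace E]
    [MeasurableSpace E] (μ : Measure E) : ∀ᵐ x ∂μ, x ∈ measureSupport μ := by
  rw [measureSupport_eq_support]
  exact Measure.support_mem_ae

theorem IsCompact.norm_le_iSup_norm {E : Type*} [SeminormedAddCommGroup E] {S : Set E}
    (hS : IsCompact S) {x : E} (hx : x ∈ S) : ‖x‖ ≤ ⨆ y : S, ‖(y : E)‖ :=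
  have : CompactSpace S := isCompact_iff_compactSpace.mp hS
  have hcont : Continuous fun y : S => ‖(y : E)‖ := by fun_prop
  le_ciSup (isCompact_range hcont).bddAbove ⟨x, hx⟩

theorem tendstoUniformly_of_tendsto_iSup_norm_sub {ι X E : Type*} [TopologicalSpace X]
    [CompactSpace X] [SeminormedAddCommGroup E] {l : Filter ι} {F : ι → X → E} {f : X → E}
    (hF : ∀ i, Continuous (F i)) (hf : Continuous f)
    (h : Tendsto (fun i => ⨆ x, ‖F i x - f x‖) l (𝓝 0)) : TendstoUniformly F f l := by
  rw [Metric.tendstoUniformly_iff]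
  intro ε hε
  filter_upwards [h.eventually (gt_mem_nhds hε)] with i hi x
  rw [dist_comm, dist_eq_norm]
  exact (le_ciSup (isCompact_range ((hF i).sub hf).norm).bddAbove x).trans_lt hi

theorem forall_le_of_tendstoUniformly_of_tendsto {ι X : Type*} [TopologicalSpace X]
    {l : Filter ι} [l.NeBot] {F : ι → X → ℝ} {f : X → ℝ} {u : ι → X} {a : X}
    (hF : TendstoUniformly F f l) (hf : ContinuousAt f a) (hu : ∀ i y, F i (u i) ≤ F i y)
    (ha : Tendsto u l (𝓝 a)) (y : X) : f a ≤ f y :=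
  le_of_tendsto_of_tendsto' (hF.tendsto_comp hf ha) (hF.tendsto_at y) fun i => hu i y

theorem tendsto_of_tendstoUniformly_of_forall_le {ι X : Type*} [TopologicalSpace X]
    [CompactSpace X] {l : Filter ι} {F : ι → X → ℝ} {f : X → ℝ} {u : ι → X} {b : X}
    (hF : TendstoUniformly F f l) (hf : Continuous f) (hu : ∀ i y, F i (u i) ≤ F i y)
    (hb : ∀ a, (∀ y, f a ≤ f y) → a = b) : Tendsto u l (𝓝 b) := by
  refine tendsto_nhds_of_unique_mapClusterPt fun a ha => hb a ?_
  obtain ⟨U, hUl, hUa⟩ := mapClusterPt_iff_ultrafilter.mp ha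
  exact forall_le_of_tendstoUniformly_of_tendsto (fun s hs => hUl (hF s hs)) hf.continuousAt hu hUa

theorem stmt_4_general {D : ℕ} {M : Type*} [MetricSpace M] [CompactSpace M]
    [MeasurableSpace M] [BorelSpace M]
    (μ : Measure (EuclideanSpace ℝ (Fin D))) [IsProbabilityMeasure μ]
    (hsupp : IsCompact (measureSupport μ))
    (C : ℝ) (hC : C = ⨆ x : measureSupport μ, ‖(x : EuclideanSpace ℝ (Fin D))‖)
    (h : ℕ → M → EuclideanSpace ℝ (Fin D)) (hinf : M → EuclideanSpace ℝ (Fin D))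
    (hc : ∀ k, Continuous (h k)) (hic : Continuous hinf)
    (hconv : Tendsto (fun k => ⨆ m : M, ‖h k m - hinf m‖) atTop (𝓝 0))
    (minf : EuclideanSpace ℝ (Fin D) → M)
    (hminf : ∀ x ∈ measureSupport μ,
      {m : M | ∀ m' : M, ‖x - hinf m‖ ≤ ‖x - hinf m'‖} = {minf x})
    (mk : ℕ → EuclideanSpace ℝ (Fin D) → M)
    (hmk_meas : ∀ k, Measurable (mk k))
    (hmk : ∀ k x, ∀ m' : M, ‖x - h k (mk k x)‖ ≤ ‖x - h k m'‖)
    (g : M → EuclideanSpace ℝ (Fin D)) (hg : Continuous g)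
    (hgb : ∀ m : M, ‖g m‖ ≤ 2 * C) :
    Tendsto (fun k => ∫ x, ‖x - g (mk k x)‖ ^ 2 ∂μ) atTop
      (𝓝 (∫ x, ‖x - g (minf x)‖ ^ 2 ∂μ)) := by
  have hunif := tendstoUniformly_of_tendsto_iSup_norm_sub hc hic hconv
  have hproj : ∀ x ∈ measureSupport μ, Tendsto (fun k => mk k x) atTop (𝓝 (minf x)) := by
    intro x hx
    have hdist : UniformContinuous fun y : EuclideanSpace ℝ (Fin D) => ‖x - y‖ :=
      uniformContinuous_norm.comp (uniformContinuous_const.sub uniformContinuous_id)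
    exact tendsto_of_tendstoUniformly_of_forall_le (hdist.comp_tendstoUniformly hunif)
      (by fun_prop) (hmk · x) fun a ha => (hminf x hx).subset ha
  have hbound : ∀ k, ∀ᵐ x ∂μ, ‖‖x - g (mk k x)‖ ^ 2‖ ≤ (3 * C) ^ 2 := fun k => by
    filter_upwards [ae_mem_measureSupport μ] with x hx
    have hxg : ‖x - g (mk k x)‖ ≤ 3 * C := calc
      ‖x - g (mk k x)‖ ≤ ‖x‖ + ‖g (mk k x)‖ := norm_sub_le _ _
      _ ≤ C + 2 * C := add_le_add (hC ▸ hsupp.norm_le_iSup_norm hx) (hgb _)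
      _ = 3 * C := by ring
    rw [norm_pow, norm_norm]
    exact pow_le_pow_left₀ (norm_nonneg _) hxg 2
  refine tendsto_integral_of_dominated_convergence _ (fun k => ?_) (integrable_const _) hbound ?_
  · have := hmk_meas k
    exact (by fun_prop : Measurable fun x => ‖x - g (mk k x)‖ ^ 2).aestronglyMeasurable
  · filter_upwards [ae_mem_measureSupport μ] with x hx
    exact ((tendsto_const_nhds.sub (hg.continuousAt.tendsto.comp (hproj x hx))).norm).pow 2

/-- **Convergence of the fitting-error integrals along converging projection indices.**
With `ℙ` a compactly supported Borel probability measure on `ℝ^D`,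
`C = sup_{x ∈ supp ℙ} ‖x‖`, continuous maps `h_k → h_∞` uniformly, unique (measurably
selected) nearest points `m_∞(x)` for `h_∞` on `supp ℙ`, and measurable selections
`m_k(x)` of nearest points for `h_k`, one has, for every continuous `g` with
`max_m ‖g m‖ ≤ 2C`, `∫ ‖x - g(m_k(x))‖² dℙ → ∫ ‖x - g(m_∞(x))‖² dℙ`. -/
theorem stmt_4 {D : ℕ} {M : Type*} [MetricSpace M] [CompactSpace M] [Nonempty M]
    [MeasurableSpace M] [BorelSpace M]
    (μ : Measure (EuclideanSpace ℝ (Fin D))) [IsProbabilityMeasure μ]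
    (hsupp : IsCompact (measureSupport μ))
    (C : ℝ) (hC : C = ⨆ x : measureSupport μ, ‖(x : EuclideanSpace ℝ (Fin D))‖)
    (h : ℕ → M → EuclideanSpace ℝ (Fin D)) (hinf : M → EuclideanSpace ℝ (Fin D))
    (hc : ∀ k, Continuous (h k)) (hic : Continuous hinf)
    (hconv : Tendsto (fun k => ⨆ m : M, ‖h k m - hinf m‖) atTop (𝓝 0))
    (minf : EuclideanSpace ℝ (Fin D) → M)
    (hminf : ∀ x ∈ measureSupport μ,
      {m : M | ∀ m' : M, ‖x - hinf m‖ ≤ ‖x - hinf m'‖} = {minf x})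
    (hminf_meas : Measurable fun x : measureSupport μ => minf ↑x)
    (mk : ℕ → EuclideanSpace ℝ (Fin D) → M)
    (hmk_meas : ∀ k, Measurable (mk k))
    (hmk : ∀ k x, ∀ m' : M, ‖x - h k (mk k x)‖ ≤ ‖x - h k m'‖)
    (g : M → EuclideanSpace ℝ (Fin D)) (hg : Continuous g)
    (hgb : ∀ m : M, ‖g m‖ ≤ 2 * C) :
    Tendsto (fun k => ∫ x, ‖x - g (mk k x)‖ ^ 2 ∂μ) atTop
      (𝓝 (∫ x, ‖x - g (minf x)‖ ^ 2 ∂μ)) :=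
  stmt_4_general μ hsupp C hC h hinf hc hic hconv minf hminf mk hmk_meas hmk g hg hgb
end

section
/- Let g : ℝ → ℝ^D be twice continuously differentiable and 2π-periodic, i.e., g(t + 2π) = g(t) for all t ∈ ℝ. Then ∫_0^{2π} ‖g'(t)‖ dt ≤ (2π)^{3/2} · ( ∫_0^{2π} ‖g''(t)‖² dt )^{1/2}. -/
/-!
Periodicity gives `∫₀^{2π} g' = 0`, so `2π g'(t) = ∫₀^{2π} (g'(t) - g'(s)) ds`, and each
`‖g'(t) - g'(s)‖` is at most `∫₀^{2π} ‖g''‖` by the fundamental theorem of calculus. Hence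
`∫₀^{2π} ‖g'‖ ≤ 2π ∫₀^{2π} ‖g''‖`, and Cauchy–Schwarz bounds `∫₀^{2π} ‖g''‖` by
`(2π)^{1/2} (∫₀^{2π} ‖g''‖²)^{1/2}`.
-/

open Real Set Interval intervalIntegral
open MeasureTheory (volume setIntegral_mono_set)

section

variable {E : Type*} [NormedAddCommGroup E] [NormedSpace ℝ E] [CompleteSpace E]
  {f : ℝ → E} {a b : ℝ}

theorem norm_sub_le_integral_norm_deriv (hf : ContDiff ℝ 1 f) {u v : ℝ}
    (hu : u ∈ Icc a b) (hv : v ∈ Icc a b) :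
    ‖f v - f u‖ ≤ ∫ x in a..b, ‖deriv f x‖ := by
  have hab : a ≤ b := hu.1.trans hu.2
  have hf' : Continuous (deriv f) := hf.continuous_deriv le_rfl
  have hsub : Ι u v ⊆ Ι a b := uIoc_subset_uIoc_of_uIcc_subset_uIcc
    (uIcc_subset_uIcc (Icc_subset_uIcc hu) (Icc_subset_uIcc hv))
  calc ‖f v - f u‖ = ‖∫ x in u..v, deriv f x‖ := by
        rw [integral_deriv_eq_sub (fun x _ => hf.differentiable one_ne_zero x)
          (hf'.intervalIntegrable u v)]
    _ ≤ ∫ x in Ι u v, ‖deriv f x‖ := norm_integral_le_integral_norm_uIoc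
    _ ≤ ∫ x in Ι a b, ‖deriv f x‖ :=
        setIntegral_mono_set (hf'.norm.integrableOn_uIoc)
          (Filter.Eventually.of_forall fun _ => norm_nonneg _) hsub.eventuallyLE
    _ = ∫ x in a..b, ‖deriv f x‖ := by rw [uIoc_of_le hab, integral_of_le hab]

theorem norm_le_integral_norm_deriv_of_integral_eq_zero (hf : ContDiff ℝ 1 f) (hab : a < b)
    (hmean : ∫ x in a..b, f x = 0) {t : ℝ} (ht : t ∈ Icc a b) :
    ‖f t‖ ≤ ∫ x in a..b, ‖deriv f x‖ := by
  have hlen : 0 < b - a := sub_pos.mpr hab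
  have hshift : (b - a) • f t = ∫ s in a..b, (f t - f s) := by
    rw [integral_sub intervalIntegrable_const (hf.continuous.intervalIntegrable a b), hmean,
      sub_zero, integral_const]
  have hbound : ‖(b - a) • f t‖ ≤ (∫ x in a..b, ‖deriv f x‖) * |b - a| := by
    rw [hshift]
    refine norm_integral_le_of_norm_le_const fun s hs => ?_
    rw [uIoc_of_le hab.le] at hs
    exact norm_sub_le_integral_norm_deriv hf ⟨hs.1.le, hs.2⟩ ht
  rw [norm_smul, Real.norm_of_nonneg hlen.le, abs_of_pos hlen, mul_comm] at hbound
  exact le_of_mul_le_mul_right hbound hlen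

theorem integral_norm_le_mul_integral_norm_deriv_of_integral_eq_zero (hf : ContDiff ℝ 1 f)
    (hab : a ≤ b) (hmean : ∫ x in a..b, f x = 0) :
    ∫ x in a..b, ‖f x‖ ≤ (b - a) * ∫ x in a..b, ‖deriv f x‖ := by
  rcases hab.eq_or_lt with rfl | hab
  · simp
  calc ∫ x in a..b, ‖f x‖ ≤ ∫ _ in a..b, ∫ x in a..b, ‖deriv f x‖ :=
        integral_mono_on hab.le (hf.continuous.norm.intervalIntegrable a b) intervalIntegrable_const
          fun t ht => norm_le_integral_norm_deriv_of_integral_eq_zero hf hab hmean ht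
    _ = (b - a) * ∫ x in a..b, ‖deriv f x‖ := by rw [integral_const, smul_eq_mul]

end

theorem sq_integral_le_mul_integral_sq {φ : ℝ → ℝ} {a b : ℝ} (hab : a ≤ b)
    (hφ : IntervalIntegrable φ volume a b) (hφ2 : IntervalIntegrable (fun x => φ x ^ 2) volume a b) :
    (∫ x in a..b, φ x) ^ 2 ≤ (b - a) * ∫ x in a..b, φ x ^ 2 := by
  set S := ∫ x in a..b, φ x
  have hvar : 0 ≤ ∫ x in a..b, ((b - a) * φ x - S) ^ 2 :=
    integral_nonneg hab fun _ _ => sq_nonneg _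
  have hexpand : ∫ x in a..b, ((b - a) * φ x - S) ^ 2
      = (b - a) * ((b - a) * ∫ x in a..b, φ x ^ 2) - (b - a) * S ^ 2 := by
    have : (fun x => ((b - a) * φ x - S) ^ 2)
        = fun x => (b - a) ^ 2 * φ x ^ 2 - (2 * (b - a) * S) * φ x + S ^ 2 := by
      funext x; ring
    rw [this, integral_add ((hφ2.const_mul _).sub (hφ.const_mul _)) intervalIntegrable_const,
      integral_sub (hφ2.const_mul _) (hφ.const_mul _), integral_const_mul, integral_const_mul,
      integral_const, smul_eq_mul]
    ring
  rcases hab.eq_or_lt with rfl | hab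
  · simp [S]
  rw [hexpand, ← mul_sub] at hvar
  exact sub_nonneg.mp (nonneg_of_mul_nonneg_right hvar (sub_pos.mpr hab))

/-- **The curve length is dominated by the L² norm of the second derivative.**
Let `g : ℝ → ℝ^D` be twice continuously differentiable and `2π`-periodic. Then
`∫_0^{2π} ‖g'(t)‖ dt ≤ (2π)^{3/2} (∫_0^{2π} ‖g''(t)‖² dt)^{1/2}`. -/
theorem stmt_7 {D : ℕ} (g : ℝ → EuclideanSpace ℝ (Fin D))
    (hg : ContDiff ℝ 2 g)
    (hper : ∀ t : ℝ, g (t + 2 * π) = g t) :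
    ∫ t in (0:ℝ)..(2 * π), ‖deriv g t‖ ≤
      (2 * π) ^ ((3 : ℝ) / 2) *
        (∫ t in (0:ℝ)..(2 * π), ‖deriv (deriv g) t‖ ^ 2) ^ ((1 : ℝ) / 2) := by
  have hg' : ContDiff ℝ 1 (deriv g) := hg.deriv'
  have hg'' : Continuous (deriv (deriv g)) := hg'.continuous_deriv le_rfl
  have hmean : ∫ t in (0:ℝ)..(2 * π), deriv g t = 0 := by
    rw [integral_deriv_eq_sub (fun t _ => hg.differentiable two_ne_zero t)
      (hg'.continuous.intervalIntegrable _ _), ← zero_add (2 * π), hper, sub_self]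
  have hlength := integral_norm_le_mul_integral_norm_deriv_of_integral_eq_zero hg'
    two_pi_pos.le hmean
  have hcs := sq_integral_le_mul_integral_sq two_pi_pos.le
    (hg''.norm.intervalIntegrable 0 (2 * π)) ((hg''.norm.pow 2).intervalIntegrable 0 (2 * π))
  rw [sub_zero] at hlength hcs
  have htotal : ∫ t in (0:ℝ)..(2 * π), ‖deriv (deriv g) t‖ ≤ √(2 * π) *
      √(∫ t in (0:ℝ)..(2 * π), ‖deriv (deriv g) t‖ ^ 2) := by
    rw [← Real.sqrt_mul two_pi_pos.le]
    exact (le_abs_self _).trans (Real.abs_le_sqrt hcs)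
  calc ∫ t in (0:ℝ)..(2 * π), ‖deriv g t‖
      ≤ 2 * π * (√(2 * π) * √(∫ t in (0:ℝ)..(2 * π), ‖deriv (deriv g) t‖ ^ 2)) :=
        hlength.trans (mul_le_mul_of_nonneg_left htotal two_pi_pos.le)
    _ = (2 * π) ^ ((3 : ℝ) / 2) *
        (∫ t in (0:ℝ)..(2 * π), ‖deriv (deriv g) t‖ ^ 2) ^ ((1 : ℝ) / 2) := by
      rw [Real.sqrt_eq_rpow, Real.sqrt_eq_rpow, ← mul_assoc, ← Real.rpow_one_add' two_pi_pos.le]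
      · norm_num
      · norm_num
end

section
/- Let M be a nonempty compact metric space, let μ be a Borel probability measure on ℝ^D with compact support, and set C := sup_{x ∈ supp(μ)} ‖x‖. Let ℱ be a set of continuous maps f : M → ℝ^D, each satisfying max_{m∈M} ‖f(m)‖ ≤ 2C, such that ℱ is totally bounded with respect to the supremum metric on continuous maps M → ℝ^D. Let (X_i)_{i≥1} be independent, identically distributed ℝ^D-valued random variables with law μ on a probability space (Ω, 𝒜, P). Then T_N := sup_{f ∈ ℱ} | (1/N) ∑_{i=1}^N ϱ(X_i, f) − ∫ ϱ(x, f) dμ(x) | defines a random variable for each N, and T_N → 0 in probability as N → ∞. -/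
/-!
For `‖x‖ ≤ C` and `‖f‖, ‖g‖ ≤ 2C` in the sup norm, the fitting errors satisfy
`|ϱ(x, f) - ϱ(x, g)| ≤ 6C ‖f - g‖`, because `f ↦ infDist(x, f(M))` is 1-Lipschitz. So, almost
surely, every empirical deviation `f ↦ N⁻¹ ∑ ϱ(X_i, f) - ∫ ϱ(·, f) dμ` is `12C`-Lipschitz on `ℱ`.
The strong law makes these deviations tend to `0` at every point of a countable dense subset of
`ℱ`, and equi-Lipschitz functions on a totally bounded space that converge to `0` on a dense set
converge uniformly, which is `T_N → 0` almost surely. Measurability of `T_N` holds because a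
supremum of functions continuous in the parameter is the supremum over a countable dense set.
-/

open MeasureTheory Filter Topology ProbabilityTheory

open scoped NNReal

noncomputable section

section FittingError

variable {M E : Type*} [TopologicalSpace M]

def fittingError [PseudoMetricSpace E] (f : C(M, E)) (x : E) : ℝ :=
  Metric.infDist x (Set.range f) ^ 2

lemma fittingError_nonneg [PseudoMetricSpace E] (f : C(M, E)) (x : E) : 0 ≤ fittingError f x :=
  pow_nonneg Metric.infDist_nonneg 2

lemma continuous_fittingError [PseudoMetricSpace E] (f : C(M, E)) : Continuous (fittingError f) :=
  (Metric.continuous_infDist_pt _).pow 2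

variable [Nonempty M]

lemma infDist_range_le_norm_add [SeminormedAddCommGroup E] {f : C(M, E)} {B : ℝ}
    (hf : ∀ m, ‖f m‖ ≤ B) (x : E) : Metric.infDist x (Set.range f) ≤ ‖x‖ + B := by
  obtain ⟨m⟩ := ‹Nonempty M›
  calc Metric.infDist x (Set.range f) ≤ ‖x - f m‖ :=
        dist_eq_norm x (f m) ▸ Metric.infDist_le_dist_of_mem (Set.mem_range_self m)
    _ ≤ ‖x‖ + B := (norm_sub_le x (f m)).trans (add_le_add_right (hf m) _)

lemma fittingError_le_sq [SeminormedAddCommGroup E] {f : C(M, E)} {B : ℝ}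
    (hf : ∀ m, ‖f m‖ ≤ B) (x : E) : fittingError f x ≤ (‖x‖ + B) ^ 2 :=
  pow_le_pow_left₀ Metric.infDist_nonneg (infDist_range_le_norm_add hf x) 2

lemma integrable_fittingError [SeminormedAddCommGroup E] [MeasurableSpace E]
    [OpensMeasurableSpace E] {μ : Measure E} [IsFiniteMeasure μ] {f : C(M, E)} {B R : ℝ}
    (hf : ∀ m, ‖f m‖ ≤ B) (hμ : ∀ᵐ x ∂μ, ‖x‖ ≤ R) : Integrable (fittingError f) μ := by
  refine Integrable.of_bound (continuous_fittingError f).aestronglyMeasurable ((R + B) ^ 2)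
    (hμ.mono fun x hx => ?_)
  rw [Real.norm_eq_abs, abs_of_nonneg (fittingError_nonneg f x)]
  have hB : 0 ≤ ‖x‖ + B := Metric.infDist_nonneg.trans (infDist_range_le_norm_add hf x)
  exact (fittingError_le_sq hf x).trans (pow_le_pow_left₀ hB (by linarith) 2)

variable [CompactSpace M]

lemma lipschitzWith_infDist_range [PseudoMetricSpace E] (x : E) :
    LipschitzWith 1 fun f : C(M, E) => Metric.infDist x (Set.range f) := by
  refine LipschitzWith.of_le_add fun f g => ?_
  rw [← sub_le_iff_le_add, Metric.le_infDist (Set.range_nonempty g)]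
  rintro _ ⟨m, rfl⟩
  calc Metric.infDist x (Set.range f) - dist f g
      ≤ dist x (f m) - dist (g m) (f m) := by
        gcongr
        · exact Metric.infDist_le_dist_of_mem (Set.mem_range_self m)
        · exact dist_comm f g ▸ ContinuousMap.dist_apply_le_dist m
    _ ≤ dist x (g m) := by linarith [dist_triangle x (g m) (f m)]

lemma continuous_fittingError_left [PseudoMetricSpace E] (x : E) :
    Continuous fun f : C(M, E) => fittingError f x :=
  (lipschitzWith_infDist_range x).continuous.pow 2

lemma abs_fittingError_sub_le [SeminormedAddCommGroup E] {f g : C(M, E)} {B : ℝ}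
    (hf : ∀ m, ‖f m‖ ≤ B) (hg : ∀ m, ‖g m‖ ≤ B) (x : E) :
    |fittingError f x - fittingError g x| ≤ 2 * (‖x‖ + B) * dist f g := by
  have hdist : |Metric.infDist x (Set.range f) - Metric.infDist x (Set.range g)| ≤ dist f g := by
    simpa [Real.dist_eq] using (lipschitzWith_infDist_range x).dist_le_mul f g
  rw [fittingError, fittingError, sq_sub_sq, abs_mul,
    abs_of_nonneg (add_nonneg Metric.infDist_nonneg Metric.infDist_nonneg)]
  have hsum : Metric.infDist x (Set.range f) + Metric.infDist x (Set.range g) ≤ 2 * (‖x‖ + B) := by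
    linarith [infDist_range_le_norm_add hf x, infDist_range_le_norm_add hg x]
  exact mul_le_mul hsum hdist (abs_nonneg _)
    ((add_nonneg Metric.infDist_nonneg Metric.infDist_nonneg).trans hsum)

lemma lipschitzWith_fittingError [SeminormedAddCommGroup E] {F : Set C(M, E)} {B : ℝ}
    (hF : ∀ f ∈ F, ∀ m, ‖f m‖ ≤ B) (x : E) :
    LipschitzWith (2 * (‖x‖ + B)).toNNReal fun f : F => fittingError f.1 x := by
  refine LipschitzWith.of_dist_le_mul fun f g => ?_
  rw [Real.dist_eq, Subtype.dist_eq]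
  refine (abs_fittingError_sub_le (hF f f.2) (hF g g.2) x).trans ?_
  gcongr
  exact Real.le_coe_toNNReal _

lemma iInf_norm_sub_sq_eq_fittingError [SeminormedAddCommGroup E] (f : C(M, E)) (x : E) :
    ⨅ m, ‖x - f m‖ ^ 2 = fittingError f x := by
  obtain ⟨_, ⟨m₀, rfl⟩, hm₀⟩ :=
    (isCompact_range f.continuous).exists_infDist_eq_dist (Set.range_nonempty f) x
  rw [fittingError, hm₀, dist_eq_norm]
  refine le_antisymm (ciInf_le ⟨0, ?_⟩ m₀) (le_ciInf fun m => ?_)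
  · rintro _ ⟨m, rfl⟩
    positivity
  · gcongr
    rw [← dist_eq_norm x, ← dist_eq_norm x, ← hm₀]
    exact Metric.infDist_le_dist_of_mem (Set.mem_range_self m)

end FittingError

lemma tendsto_iSup_abs_of_lipschitzWith {ι : Type*} [PseudoMetricSpace ι]
    (htb : TotallyBounded (Set.univ : Set ι)) {D : Set ι} (hD : Dense D) {u : ℕ → ι → ℝ}
    {L : ℝ≥0} (hu : ∀ N, LipschitzWith L (u N))
    (hconv : ∀ d ∈ D, Tendsto (fun N => u N d) atTop (𝓝 0)) :
    Tendsto (fun N => ⨆ i, |u N i|) atTop (𝓝 0) := by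
  rw [Metric.tendsto_nhds]
  intro ε hε
  obtain ⟨δ, hδ, hLδ⟩ := exists_pos_mul_lt (half_pos hε) (L : ℝ)
  obtain ⟨t, htD, htfin, hcover⟩ :=
    Metric.finite_approx_of_totallyBounded (htb.subset (Set.subset_univ D)) (δ / 2) (half_pos hδ)
  have hnet : ∀ i, ∃ d ∈ t, dist i d < δ := fun i => by
    obtain ⟨d', hd'D, hid'⟩ := Metric.mem_closure_iff.1 (hD i) (δ / 2) (half_pos hδ)
    obtain ⟨d, hdt, hd'd⟩ := Set.mem_iUnion₂.1 (hcover hd'D)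
    exact ⟨d, hdt, by linarith [dist_triangle i d' d, Metric.mem_ball.1 hd'd]⟩
  have hsmall : ∀ᶠ N in atTop, ∀ d ∈ t, |u N d| < ε / 2 :=
    htfin.eventually_all.2 fun d hd => by
      simpa using (Metric.tendsto_nhds.1 (hconv d (htD hd))) (ε / 2) (half_pos hε)
  filter_upwards [hsmall] with N hN
  have hsup : ⨆ i, |u N i| ≤ ε / 2 + L * δ := by
    refine Real.iSup_le (fun i => ?_) (by positivity)
    obtain ⟨d, hdt, hid⟩ := hnet i
    have hlip : |u N i - u N d| ≤ L * dist i d := Real.dist_eq _ _ ▸ (hu N).dist_le_mul i d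
    calc |u N i| ≤ |u N d| + |u N i - u N d| := by
          linarith [abs_sub_abs_le_abs_sub (u N i) (u N d)]
      _ ≤ ε / 2 + L * δ := add_le_add (hN d hdt).le (hlip.trans (by gcongr))
  rw [Real.dist_eq, sub_zero, abs_of_nonneg (Real.iSup_nonneg fun i => abs_nonneg _)]
  linarith

lemma measurable_iSup_of_continuous {ι Ω : Type*} [TopologicalSpace ι]
    [TopologicalSpace.SeparableSpace ι] [MeasurableSpace Ω] {G : ι → Ω → ℝ}
    (hmeas : ∀ i, Measurable (G i)) (hcont : ∀ ω, Continuous fun i => G i ω) :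
    Measurable fun ω => ⨆ i, G i ω := by
  obtain ⟨D, hDc, hD⟩ := TopologicalSpace.exists_countable_dense ι
  have := hDc.to_subtype
  simp_rw [← hD.ciSup' (hcont _)]
  exact Measurable.iSup fun d => hmeas d

section EmpiricalDeviation

variable {E : Type*} [MeasurableSpace E]

def empiricalDeviation (μ : Measure E) (φ : E → ℝ) (N : ℕ) (xs : ℕ → E) : ℝ :=
  (N : ℝ)⁻¹ * ∑ n ∈ Finset.range N, φ (xs n) - ∫ x, φ x ∂μ

variable {μ : Measure E} {ι : Type*} {φ : ι → E → ℝ}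

lemma LipschitzWith.average [PseudoMetricSpace ι] {f : ℕ → ι → ℝ} {L : ℝ≥0}
    (hf : ∀ n, LipschitzWith L (f n)) (N : ℕ) :
    LipschitzWith L fun i => (N : ℝ)⁻¹ * ∑ n ∈ Finset.range N, f n i := by
  refine LipschitzWith.of_dist_le_mul fun i j => ?_
  rw [Real.dist_eq, ← mul_sub, ← Finset.sum_sub_distrib, abs_mul, abs_inv, Nat.abs_cast]
  rcases N.eq_zero_or_pos with rfl | hN
  · simp only [CharP.cast_eq_zero, inv_zero, zero_mul]
    positivity
  rw [inv_mul_le_iff₀ (by exact_mod_cast hN)]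
  calc |∑ n ∈ Finset.range N, (f n i - f n j)|
      ≤ ∑ n ∈ Finset.range N, |f n i - f n j| := Finset.abs_sum_le_sum_abs _ _
    _ ≤ ∑ _n ∈ Finset.range N, L * dist i j :=
        Finset.sum_le_sum fun n _ => Real.dist_eq (f n i) (f n j) ▸ (hf n).dist_le_mul i j
    _ = N * (L * dist i j) := by simp

lemma lipschitzWith_integral [PseudoMetricSpace ι] [IsProbabilityMeasure μ] {L : ℝ≥0}
    (hint : ∀ i, Integrable (φ i) μ) (hlip : ∀ᵐ x ∂μ, LipschitzWith L fun i => φ i x) :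
    LipschitzWith L fun i => ∫ x, φ i x ∂μ := by
  refine LipschitzWith.of_dist_le_mul fun i j => ?_
  have hbound : ∀ᵐ x ∂μ, ‖φ i x - φ j x‖ ≤ L * dist i j :=
    hlip.mono fun x hx => dist_eq_norm (φ i x) (φ j x) ▸ hx.dist_le_mul i j
  rw [dist_eq_norm, ← integral_sub (hint i) (hint j)]
  simpa using norm_integral_le_of_norm_le_const hbound

lemma lipschitzWith_empiricalDeviation [PseudoMetricSpace ι] [IsProbabilityMeasure μ] {L : ℝ≥0}
    (hint : ∀ i, Integrable (φ i) μ) (hlipμ : ∀ᵐ x ∂μ, LipschitzWith L fun i => φ i x)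
    {xs : ℕ → E} (hlipxs : ∀ n, LipschitzWith L fun i => φ i (xs n)) (N : ℕ) :
    LipschitzWith (2 * L) fun i => empiricalDeviation μ (φ i) N xs := by
  rw [two_mul]
  exact (LipschitzWith.average hlipxs N).sub (lipschitzWith_integral hint hlipμ)

variable {Ω : Type*} [MeasurableSpace Ω] {P : Measure Ω} {X : ℕ → Ω → E}

lemma ae_tendsto_empiricalDeviation (hXmeas : ∀ n, Measurable (X n))
    (hXdist : ∀ n, Measure.map (X n) P = μ) (hXindep : iIndepFun X P)
    {ψ : E → ℝ} (hψ : Measurable ψ) (hint : Integrable ψ μ) :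
    ∀ᵐ ω ∂P, Tendsto (fun N => empiricalDeviation μ ψ N (X · ω)) atTop (𝓝 0) := by
  have hident : ∀ n, IdentDistrib (X n) (X 0) P P := fun n =>
    ⟨(hXmeas n).aemeasurable, (hXmeas 0).aemeasurable, by rw [hXdist n, hXdist 0]⟩
  have hint₀ : Integrable (ψ ∘ X 0) P := by
    rwa [← integrable_map_measure hψ.aestronglyMeasurable (hXmeas 0).aemeasurable, hXdist 0]
  have hmean : ∫ ω, (ψ ∘ X 0) ω ∂P = ∫ x, ψ x ∂μ := by
    rw [← hXdist 0, integral_map (hXmeas 0).aemeasurable hψ.aestronglyMeasurable]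
    rfl
  have hlaw := strong_law_ae_real (fun n => ψ ∘ X n) hint₀
    (fun m n hmn => (hXindep.indepFun hmn).comp hψ hψ) (fun n => (hident n).comp hψ)
  filter_upwards [hlaw] with ω hω
  rw [hmean] at hω
  simpa [empiricalDeviation, div_eq_inv_mul] using hω.sub_const (∫ x, ψ x ∂μ)

lemma measurable_iSup_abs_empiricalDeviation [TopologicalSpace ι]
    [TopologicalSpace.SeparableSpace ι] (hφ : ∀ i, Measurable (φ i))
    (hcont : ∀ x, Continuous fun i => φ i x) (hcont_int : Continuous fun i => ∫ x, φ i x ∂μ)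
    (hXmeas : ∀ n, Measurable (X n)) (N : ℕ) :
    Measurable fun ω => ⨆ i, |empiricalDeviation μ (φ i) N (X · ω)| :=
  measurable_iSup_of_continuous
    (fun i => ((((Finset.measurable_sum _ fun n _ => (hφ i).comp (hXmeas n)).const_mul _).sub
      measurable_const).abs))
    (fun ω => ((continuous_const.mul (continuous_finsetSum _ fun n _ => hcont (X n ω))).sub
      hcont_int).abs)

theorem ae_tendsto_iSup_abs_empiricalDeviation [PseudoMetricSpace ι] [IsProbabilityMeasure μ]
    (htb : TotallyBounded (Set.univ : Set ι)) (hφ : ∀ i, Measurable (φ i))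
    (hint : ∀ i, Integrable (φ i) μ) {K : Set E} (hK : ∀ᵐ x ∂μ, x ∈ K) {L : ℝ≥0}
    (hlip : ∀ x ∈ K, LipschitzWith L fun i => φ i x) (hXmeas : ∀ n, Measurable (X n))
    (hXdist : ∀ n, Measure.map (X n) P = μ) (hXindep : iIndepFun X P) :
    ∀ᵐ ω ∂P, Tendsto (fun N => ⨆ i, |empiricalDeviation μ (φ i) N (X · ω)|) atTop (𝓝 0) := by
  have := TopologicalSpace.isSeparable_univ_iff.1 htb.isSeparable
  obtain ⟨D, hDc, hD⟩ := TopologicalSpace.exists_countable_dense ι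
  have hXK : ∀ᵐ ω ∂P, ∀ n, X n ω ∈ K :=
    ae_all_iff.2 fun n => ae_of_ae_map (hXmeas n).aemeasurable (hXdist n ▸ hK)
  have hlaw : ∀ᵐ ω ∂P, ∀ d ∈ D,
      Tendsto (fun N => empiricalDeviation μ (φ d) N (X · ω)) atTop (𝓝 0) :=
    (ae_ball_iff hDc).2 fun d _ =>
      ae_tendsto_empiricalDeviation hXmeas hXdist hXindep (hφ d) (hint d)
  filter_upwards [hXK, hlaw] with ω hωK hωD
  exact tendsto_iSup_abs_of_lipschitzWith htb hD
    (fun N => lipschitzWith_empiricalDeviation hint (hK.mono hlip) (fun n => hlip _ (hωK n)) N) hωD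

end EmpiricalDeviation

lemma ae_norm_le_iSup_measureSupport {E : Type*} [SeminormedAddCommGroup E] [MeasurableSpace E]
    [HereditarilyLindelofSpace E] {μ : Measure E} (hsupp : IsCompact (measureSupport μ)) :
    ∀ᵐ x ∂μ, ‖x‖ ≤ ⨆ y : measureSupport μ, ‖(y : E)‖ := by
  have hsupp_eq : measureSupport μ = μ.support :=
    Set.ext fun x => (μ.mem_support_iff_forall x).symm
  have hbdd : BddAbove (Set.range fun y : measureSupport μ => ‖(y : E)‖) := by
    simpa only [Set.image_eq_range] using (hsupp.image continuous_norm).bddAbove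
  filter_upwards [hsupp_eq ▸ μ.support_mem_ae] with x hx using le_ciSup hbdd ⟨x, hx⟩

end

/-- **Uniform law of large numbers for the fitting error over a totally bounded class.**
With `μ` a compactly supported Borel probability measure on `ℝ^D`,
`C = sup_{x ∈ supp μ} ‖x‖`, `F` a totally bounded (w.r.t. the supremum metric) family of
continuous maps `M → ℝ^D` all bounded by `2C`, and `(X_i)` i.i.d. with law `μ`, the
quantity `T_N = sup_{f ∈ F} |N⁻¹ ∑_{i<N} ϱ(X_i, f) - ∫ ϱ(x, f) dμ|`
(with `ϱ(x,f) = min_m ‖x - f m‖²`) is measurable for each `N`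
and tends to `0` in probability. -/
theorem stmt_9 {D : ℕ} {M : Type*} [MetricSpace M] [CompactSpace M] [Nonempty M]
    {Ω : Type*} [MeasurableSpace Ω] (P : Measure Ω) [IsProbabilityMeasure P]
    (μ : Measure (EuclideanSpace ℝ (Fin D))) [IsProbabilityMeasure μ]
    (hsupp : IsCompact (measureSupport μ))
    (C : ℝ) (hC : C = ⨆ x : measureSupport μ, ‖(x : EuclideanSpace ℝ (Fin D))‖)
    (F : Set C(M, EuclideanSpace ℝ (Fin D)))
    (hFtb : TotallyBounded F)
    (hFb : ∀ f ∈ F, ∀ m : M, ‖f m‖ ≤ 2 * C)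
    (X : ℕ → Ω → EuclideanSpace ℝ (Fin D))
    (hXmeas : ∀ i, Measurable (X i))
    (hXdist : ∀ i, Measure.map (X i) P = μ)
    (hXindep : iIndepFun X P)
    (T : ℕ → Ω → ℝ)
    (hT : ∀ N ω, T N ω =
      ⨆ f : F, |(N : ℝ)⁻¹ * ∑ i ∈ Finset.range N,
            (⨅ m : M, ‖X i ω - (f : C(M, EuclideanSpace ℝ (Fin D))) m‖ ^ 2) -
          ∫ x, (⨅ m : M, ‖x - (f : C(M, EuclideanSpace ℝ (Fin D))) m‖ ^ 2) ∂μ|) :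
    (∀ N, Measurable (T N)) ∧
      TendstoInMeasure P T atTop (fun _ => (0 : ℝ)) := by
  have hfit : T = fun N ω => ⨆ f : F, |empiricalDeviation μ (fittingError f.1) N (X · ω)| := by
    ext N ω
    simp only [hT, iInf_norm_sub_sq_eq_fittingError]
    rfl
  have hμC : ∀ᵐ x ∂μ, x ∈ Metric.closedBall 0 C := by
    simpa [hC] using ae_norm_le_iSup_measureSupport hsupp
  have hlip : ∀ x ∈ Metric.closedBall 0 C,
      LipschitzWith (6 * C).toNNReal fun f : F => fittingError f.1 x := fun x hx =>
    (lipschitzWith_fittingError hFb x).weaken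
      (Real.toNNReal_le_toNNReal (by linarith [mem_closedBall_zero_iff.1 hx]))
  have hint : ∀ f : F, Integrable (fittingError f.1) μ := fun f =>
    integrable_fittingError (hFb f f.2) (hμC.mono fun _ => mem_closedBall_zero_iff.1)
  have htb : TotallyBounded (Set.univ : Set F) := by
    simpa using totallyBounded_preimage (f := ((↑) : F → C(M, EuclideanSpace ℝ (Fin D))))
      isUniformEmbedding_subtype_val.isUniformInducing hFtb
  have := TopologicalSpace.isSeparable_univ_iff.1 htb.isSeparable
  have hmeas : ∀ N, Measurable (T N) := by
    rw [hfit]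
    exact measurable_iSup_abs_empiricalDeviation (fun f => (continuous_fittingError _).measurable)
      (fun x => (continuous_fittingError_left x).comp continuous_subtype_val)
      (lipschitzWith_integral hint (hμC.mono hlip)).continuous hXmeas
  refine ⟨hmeas, tendstoInMeasure_of_tendsto_ae (fun N => (hmeas N).aestronglyMeasurable) ?_⟩
  rw [hfit]
  exact ae_tendsto_iSup_abs_empiricalDeviation htb (fun f => (continuous_fittingError _).measurable)
    hint hμC hlip hXmeas hXdist hXindep
end
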